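/- Let F ⊆ ℝ² be a nonempty bounded open set and D ⊆ ℝ³ a bounded measurable set. Let ω⁰ ≠ 0 and let Φ⁰ : ℝ³ → ℝ, ξ⁰ : ℝ² → ℝ be C¹ functions satisfying the zero-order (Steklov) system in weak form: (K⁰) ∫_D ⟨∇Φ⁰(x), ∇f(x)⟩ dx = ω⁰ ∫_F ξ⁰(p) f(p,0) dp for every C¹ f : ℝ³ → ℝ, and (D⁰) ∫_F ξ⁰(p) g(p) dp = ω⁰ ∫_F Φ⁰(p,0) g(p) dp for every C¹ g : ℝ² → ℝ. Let ω¹ ∈ ℝ and C¹ functions Φ¹ : ℝ³ → ℝ, ξ¹ : ℝ² → ℝ satisfy the first-order system in weak form: (K¹) ∫_D ⟨∇Φ¹(x), ∇f(x)⟩ dx = ∫_F (ω⁰ ξ¹(p) + ω¹ ξ⁰(p)) f(p,0) dp for every C¹ f, and (D¹) ∫_F (ξ¹(p) g(p) + ⟨∇ξ⁰(p), ∇g(p)⟩) dp = ∫_F (ω⁰ Φ¹(p,0) + ω¹ Φ⁰(p,0)) g(p) dp for every C¹ g. If ∫_F Φ⁰(p,0)² dp ≠ 0, then ω¹ = (ω⁰/2)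 · (∫_F ‖∇(p ↦ Φ⁰(p,0))(p)‖² dp) / (∫_F Φ⁰(p,0)² dp). -/

import Mathlib

/-!
The weak dynamic condition (D⁰) forces `ξ⁰ = ω⁰ Φ⁰(·,0)` pointwise on the open set `F`
(fundamental lemma of the calculus of variations), hence `∇ξ⁰ = ω⁰ ∇Φ⁰(·,0)` on `F`.
Testing (K¹) with `Φ⁰` and (K⁰) with `Φ¹`, the symmetry of the Dirichlet form gives
`ω⁰ ∫ ξ¹Φ⁰ + ω¹ω⁰ ‖Φ⁰‖² = ω⁰² ∫ Φ⁰Φ¹` on `F`, while testing (D¹) with `Φ⁰(·,0)` gives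
`∫ ξ¹Φ⁰ + ω⁰ ‖∇Φ⁰‖² = ω⁰ ∫ Φ⁰Φ¹ + ω¹ ‖Φ⁰‖²`. Eliminating the unknown cross terms leaves
`ω⁰ ‖∇Φ⁰‖² = 2 ω¹ ‖Φ⁰‖²`.
-/

open MeasureTheory RealInnerProductSpace

noncomputable section

abbrev E2 : Type := EuclideanSpace ℝ (Fin 2)
abbrev E3 : Type := EuclideanSpace ℝ (Fin 3)

/-- Embedding of the free surface plane: `p = (x,y) ↦ (x,y,0)`. -/
def emb (p : E2) : E3 := (WithLp.equiv 2 (Fin 3 → ℝ)).symm ![p 0, p 1, 0]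

/-- Dirichlet energy `D[Φ] = (1/2)∫_D ‖∇Φ‖²`. -/
def Dir (D : Set E3) (Φ : E3 → ℝ) : ℝ := (1/2) * ∫ x in D, ‖gradient Φ x‖^2

/-- Free surface energy `S[ξ] = (1/2)∫_F (ξ² + Bo⁻¹‖∇ξ‖²)`. -/
def Surf (F : Set E2) (Bo : ℝ) (ξ : E2 → ℝ) : ℝ :=
  (1/2) * ∫ p in F, (ξ p ^ 2 + Bo⁻¹ * ‖gradient ξ p‖^2)

/-- The pairing `⟨Φ,ξ⟩_F = ∫_F Φ(x,y,0) ξ(x,y)`. -/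
def pairF (F : Set E2) (Φ : E3 → ℝ) (ξ : E2 → ℝ) : ℝ := ∫ p in F, Φ (emb p) * ξ p

/-- `(ω,Φ,ξ)` is a weak solution of the sloshing problem with surface tension. -/
def IsWeakSol (D : Set E3) (F : Set E2) (Bo ω : ℝ) (Φ : E3 → ℝ) (ξ : E2 → ℝ) : Prop :=
  ContDiff ℝ 1 Φ ∧ ContDiff ℝ 1 ξ ∧
  (∀ f : E3 → ℝ, ContDiff ℝ 1 f →
    (∫ x in D, ⟪gradient Φ x, gradient f x⟫) = ω * ∫ p in F, ξ p * f (emb p)) ∧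
  (∀ g : E2 → ℝ, ContDiff ℝ 1 g →
    (∫ p in F, (ξ p * g p + Bo⁻¹ * ⟪gradient ξ p, gradient g p⟫))
      = ω * ∫ p in F, Φ (emb p) * g p)

/-- The admissible class `𝒜`: pairs of C¹ functions with zero mean over `F`. -/
def Adm (F : Set E2) (Φ : E3 → ℝ) (ξ : E2 → ℝ) : Prop :=
  ContDiff ℝ 1 Φ ∧ ContDiff ℝ 1 ξ ∧
  (∫ p in F, Φ (emb p)) = 0 ∧ (∫ p in F, ξ p) = 0

open Bornology Set
open scoped ContDiff

section Integrability

variable {X : Type*} [MetricSpace X] [ProperSpace X] [MeasurableSpace X] [BorelSpace X]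
  {μ : Measure X} [IsFiniteMeasureOnCompacts μ] {s : Set X}

lemma Continuous.integrableOn_of_isBounded {G : Type*} [NormedAddCommGroup G] {f : X → G}
    (hf : Continuous f) (hs : IsBounded s) :
    IntegrableOn f s μ :=
  (hf.continuousOn.integrableOn_compact hs.isCompact_closure).mono_set subset_closure

lemma setIntegral_linearCombination_mul {f g h : X → ℝ} (hf : Continuous f) (hg : Continuous g)
    (hh : Continuous h) (hs : IsBounded s) (a b : ℝ) :
    ∫ x in s, (a * f x + b * g x) * h x ∂μ
      = a * ∫ x in s, f x * h x ∂μ + b * ∫ x in s, g x * h x ∂μ := by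
  simp_rw [add_mul, mul_assoc]
  rw [integral_add (f := fun x => a * (f x * h x)) (g := fun x => b * (g x * h x))
      ((continuous_const.mul (hf.mul hh)).integrableOn_of_isBounded hs)
      ((continuous_const.mul (hg.mul hh)).integrableOn_of_isBounded hs),
    integral_const_mul, integral_const_mul]

end Integrability

section FundamentalLemma

variable {E : Type*} [NormedAddCommGroup E] [NormedSpace ℝ E] [FiniteDimensional ℝ E]
  [MeasurableSpace E] [BorelSpace E] {μ : Measure E} [IsLocallyFiniteMeasure μ]
  [μ.IsOpenPosMeasure] {U : Set E}

lemma IsOpen.eqOn_zero_of_integral_contDiff_mul_eq_zero (hU : IsOpen U) {h : E → ℝ}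
    (hh : ContinuousOn h U)
    (hint : ∀ g : E → ℝ, ContDiff ℝ ∞ g → HasCompactSupport g → tsupport g ⊆ U →
      ∫ x in U, g x * h x ∂μ = 0) :
    EqOn h 0 U := by
  have hae : ∀ᵐ x ∂μ, x ∈ U → h x = 0 := by
    refine hU.ae_eq_zero_of_integral_contDiff_smul_eq_zero
      (hh.locallyIntegrableOn hU.measurableSet) fun g hg hgc hgU => ?_
    rw [← setIntegral_eq_integral_of_forall_compl_eq_zero
      fun x hx => by simp [image_eq_zero_of_notMem_tsupport (fun hx' => hx (hgU hx'))]]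
    exact hint g hg hgc hgU
  exact Measure.eqOn_open_of_ae_eq ((ae_restrict_iff' hU.measurableSet).2 hae) hU hh
    continuousOn_const

lemma IsOpen.eqOn_const_mul_of_integral_mul_eq (hU : IsOpen U) (hUb : IsBounded U)
    {ξ φ : E → ℝ} (hξ : Continuous ξ) (hφ : Continuous φ) (c : ℝ)
    (hint : ∀ g : E → ℝ, ContDiff ℝ 1 g →
      ∫ x in U, ξ x * g x ∂μ = c * ∫ x in U, φ x * g x ∂μ) :
    EqOn ξ (fun x => c * φ x) U := by
  have hzero := hU.eqOn_zero_of_integral_contDiff_mul_eq_zero (μ := μ)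
    (h := fun x => ξ x - c * φ x) (hξ.sub (continuous_const.mul hφ)).continuousOn
    fun g hg _ _ => by
      have hg1 : ContDiff ℝ 1 g := hg.of_le (by exact_mod_cast le_top)
      rw [← sub_eq_zero.2 (hint g hg1), ← integral_const_mul, ← integral_sub]
      · congr 1; ext x; ring
      · exact (hξ.mul hg1.continuous).integrableOn_of_isBounded hUb
      · exact (continuous_const.mul (hφ.mul hg1.continuous)).integrableOn_of_isBounded hUb
  exact fun x hx => sub_eq_zero.1 (hzero hx)

end FundamentalLemma

section Gradient

variable {H : Type*} [NormedAddCommGroup H] [InnerProductSpace ℝ H] [CompleteSpace H]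

lemma ContDiff.continuous_gradient {f : H → ℝ} (hf : ContDiff ℝ 1 f) : Continuous (gradient f) :=
  (InnerProductSpace.toDual ℝ H).symm.continuous.comp (hf.continuous_fderiv one_ne_zero)

lemma gradient_const_mul {f : H → ℝ} {x : H} (c : ℝ) (hf : DifferentiableAt ℝ f x) :
    gradient (fun y => c * f y) x = c • gradient f x := by
  simp [gradient, fderiv_const_mul hf]

lemma IsOpen.gradient_eq_const_smul_of_eqOn {U : Set H} (hU : IsOpen U) {ξ φ : H → ℝ} {c : ℝ}
    (hξ : EqOn ξ (fun x => c * φ x) U) (hφ : Differentiable ℝ φ) {x : H} (hx : x ∈ U) :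
    gradient ξ x = c • gradient φ x := by
  rw [Filter.EventuallyEq.gradient_eq (Filter.eventuallyEq_of_mem (hU.mem_nhds hx) hξ),
    gradient_const_mul c (hφ x)]

end Gradient

lemma contDiff_emb {n : WithTop ℕ∞} : ContDiff ℝ n emb := by
  refine (EuclideanSpace.equiv (Fin 3) ℝ).symm.contDiff.comp (contDiff_pi.2 fun i => ?_)
  fin_cases i
  · exact (EuclideanSpace.proj (0 : Fin 2) : E2 →L[ℝ] ℝ).contDiff
  · exact (EuclideanSpace.proj (1 : Fin 2) : E2 →L[ℝ] ℝ).contDiff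
  · exact contDiff_const

theorem first_order_perturbation_general
    (D : Set E3) (F : Set E2)
    (hFopen : IsOpen F) (hFb : Bornology.IsBounded F)
    (ω0 : ℝ) (hω0 : ω0 ≠ 0)
    (Φ0 : E3 → ℝ) (ξ0 : E2 → ℝ)
    (hΦ0 : ContDiff ℝ 1 Φ0) (hξ0 : ContDiff ℝ 1 ξ0)
    (hK0 : ∀ f : E3 → ℝ, ContDiff ℝ 1 f →
      (∫ x in D, ⟪gradient Φ0 x, gradient f x⟫) = ω0 * ∫ p in F, ξ0 p * f (emb p))
    (hD0 : ∀ g : E2 → ℝ, ContDiff ℝ 1 g →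
      (∫ p in F, ξ0 p * g p) = ω0 * ∫ p in F, Φ0 (emb p) * g p)
    (ω1 : ℝ) (Φ1 : E3 → ℝ) (ξ1 : E2 → ℝ)
    (hΦ1 : ContDiff ℝ 1 Φ1) (hξ1 : ContDiff ℝ 1 ξ1)
    (hK1 : ∀ f : E3 → ℝ, ContDiff ℝ 1 f →
      (∫ x in D, ⟪gradient Φ1 x, gradient f x⟫)
        = ∫ p in F, (ω0 * ξ1 p + ω1 * ξ0 p) * f (emb p))
    (hD1 : ∀ g : E2 → ℝ, ContDiff ℝ 1 g →
      (∫ p in F, (ξ1 p * g p + ⟪gradient ξ0 p, gradient g p⟫))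
        = ∫ p in F, (ω0 * Φ1 (emb p) + ω1 * Φ0 (emb p)) * g p)
    (hL2 : (∫ p in F, Φ0 (emb p) ^ 2) ≠ 0) :
    ω1 = (ω0 / 2) * (∫ p in F, ‖gradient (fun q : E2 => Φ0 (emb q)) p‖ ^ 2)
      / ∫ p in F, Φ0 (emb p) ^ 2 := by
  set u : E2 → ℝ := fun q => Φ0 (emb q)
  set v : E2 → ℝ := fun q => Φ1 (emb q)
  have hu : ContDiff ℝ 1 u := hΦ0.comp contDiff_emb
  have hv : ContDiff ℝ 1 v := hΦ1.comp contDiff_emb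
  have hgu : Continuous (gradient u) := hu.continuous_gradient
  have hξ0u : EqOn ξ0 (fun p => ω0 * u p) F :=
    hFopen.eqOn_const_mul_of_integral_mul_eq hFb hξ0.continuous hu.continuous ω0 hD0
  have hcross : ω0 * (∫ p in F, ξ1 p * u p) + ω1 * (ω0 * ∫ p in F, u p * u p)
      = ω0 * (ω0 * ∫ p in F, u p * v p) := by
    rw [← hD0 u hu, ← hD0 v hv, ← hK0 Φ1 hΦ1,
      ← setIntegral_linearCombination_mul hξ1.continuous hξ0.continuous hu.continuous hFb,
      ← hK1 Φ0 hΦ0]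
    simp_rw [real_inner_comm]
  have hdyn : (∫ p in F, ξ1 p * u p) + ω0 * ∫ p in F, ‖gradient u p‖ ^ 2
      = ω0 * (∫ p in F, v p * u p) + ω1 * ∫ p in F, u p * u p := by
    rw [← setIntegral_linearCombination_mul hv.continuous hu.continuous hu.continuous hFb,
      ← hD1 u hu, ← integral_const_mul, ← integral_add (f := fun p => ξ1 p * u p)
        (g := fun p => ω0 * ‖gradient u p‖ ^ 2)
        ((hξ1.continuous.mul hu.continuous).integrableOn_of_isBounded hFb)
        (Continuous.integrableOn_of_isBounded (by fun_prop) hFb)]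
    refine setIntegral_congr_fun hFopen.measurableSet fun p hp => ?_
    simp only [hFopen.gradient_eq_const_smul_of_eqOn hξ0u (hu.differentiable one_ne_zero) hp,
      real_inner_smul_left, real_inner_self_eq_norm_sq]
  have hvu : ∫ p in F, v p * u p = ∫ p in F, u p * v p := by simp_rw [mul_comm]
  have huu : ∫ p in F, u p * u p = ∫ p in F, u p ^ 2 := by simp_rw [sq]
  rw [hvu, huu] at hdyn
  rw [huu] at hcross
  have henergy : ω0 * ∫ p in F, ‖gradient u p‖ ^ 2 = 2 * ω1 * ∫ p in F, u p ^ 2 :=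
    mul_left_cancel₀ hω0 (by linear_combination ω0 * hdyn - hcross)
  rw [eq_div_iff hL2]
  linear_combination -henergy / 2

/-- Theorem 5.2. First-order perturbation formula for a simple
eigenvalue in the inverse Bond number `ε = Bo⁻¹`:
`ω¹ = (ω⁰/2)·‖∇_F Φ⁰‖²_{L²(F)}/‖Φ⁰‖²_{L²(F)}`. -/
theorem first_order_perturbation
    (D : Set E3) (F : Set E2)
    (hD : Bornology.IsBounded D)
    (hFopen : IsOpen F) (hFne : F.Nonempty) (hFb : Bornology.IsBounded F)
    (hDm : MeasurableSet D)
    (ω0 : ℝ) (hω0 : ω0 ≠ 0)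
    (Φ0 : E3 → ℝ) (ξ0 : E2 → ℝ)
    (hΦ0 : ContDiff ℝ 1 Φ0) (hξ0 : ContDiff ℝ 1 ξ0)
    (hK0 : ∀ f : E3 → ℝ, ContDiff ℝ 1 f →
      (∫ x in D, ⟪gradient Φ0 x, gradient f x⟫) = ω0 * ∫ p in F, ξ0 p * f (emb p))
    (hD0 : ∀ g : E2 → ℝ, ContDiff ℝ 1 g →
      (∫ p in F, ξ0 p * g p) = ω0 * ∫ p in F, Φ0 (emb p) * g p)
    (ω1 : ℝ) (Φ1 : E3 → ℝ) (ξ1 : E2 → ℝ)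
    (hΦ1 : ContDiff ℝ 1 Φ1) (hξ1 : ContDiff ℝ 1 ξ1)
    (hK1 : ∀ f : E3 → ℝ, ContDiff ℝ 1 f →
      (∫ x in D, ⟪gradient Φ1 x, gradient f x⟫)
        = ∫ p in F, (ω0 * ξ1 p + ω1 * ξ0 p) * f (emb p))
    (hD1 : ∀ g : E2 → ℝ, ContDiff ℝ 1 g →
      (∫ p in F, (ξ1 p * g p + ⟪gradient ξ0 p, gradient g p⟫))
        = ∫ p in F, (ω0 * Φ1 (emb p) + ω1 * Φ0 (emb p)) * g p)
    (hL2 : (∫ p in F, Φ0 (emb p) ^ 2) ≠ 0) :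
    ω1 = (ω0 / 2) * (∫ p in F, ‖gradient (fun q : E2 => Φ0 (emb q)) p‖ ^ 2)
      / ∫ p in F, Φ0 (emb p) ^ 2 :=
  first_order_perturbation_general D F hFopen hFb ω0 hω0 Φ0 ξ0 hΦ0 hξ0 hK0 hD0 ω1 Φ1 ξ1 hΦ1 hξ1 hK1
    hD1 hL2
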